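/- arXiv:2101.04351 — 2 statements merged into one kernel-verified Lean document; each statement's English description precedes it below -/
import Mathlib

section
/- Let K and V be the Kullback–Leibler divergence and the KL-variance between two centered p-dimensional Gaussian densities f_{Σ₀} and f_Σ, with dᵢ the eigenvalues of Σ₀^{1/2}Σ^{-1}Σ₀^{1/2}. Then V(f_{Σ₀}, f_Σ) = ½ Σᵢ (1 − dᵢ)² + K(f_{Σ₀}, f_Σ)², and if additionally K ≤ Σᵢ(1−dᵢ)² and Σᵢ(1−dᵢ)² ≤ 1, then V ≤ (3/2) Σᵢ (1 − dᵢ)². -/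
open Matrix Real MeasureTheory Finset

noncomputable def frobNorm {p : ℕ} (A : Matrix (Fin p) (Fin p) ℝ) : ℝ :=
  Real.sqrt (∑ i, ∑ j, (A i j) ^ 2)

noncomputable def opNorm {p : ℕ} (A : Matrix (Fin p) (Fin p) ℝ) : ℝ :=
  ‖Matrix.toEuclideanCLM (𝕜 := ℝ) A‖

/-- Density of the centered p-dimensional Gaussian with covariance S. -/
noncomputable def gaussDensity {p : ℕ} (S : Matrix (Fin p) (Fin p) ℝ) (x : Fin p → ℝ) : ℝ :=
  (2 * Real.pi) ^ (-(p : ℝ) / 2) * S.det ^ (-(1 : ℝ) / 2) *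
    Real.exp (-(1 / 2) * (x ⬝ᵥ S⁻¹.mulVec x))

/-- Kullback–Leibler divergence between the centered Gaussians. -/
noncomputable def KLdiv {p : ℕ} (S0 S : Matrix (Fin p) (Fin p) ℝ) : ℝ :=
  ∫ x, gaussDensity S0 x * Real.log (gaussDensity S0 x / gaussDensity S x)

/-- KL-variance between the centered Gaussians. -/
noncomputable def KLvar {p : ℕ} (S0 S : Matrix (Fin p) (Fin p) ℝ) : ℝ :=
  ∫ x, gaussDensity S0 x * (Real.log (gaussDensity S0 x / gaussDensity S x)) ^ 2

/-!
Let `R² = Σ₀` and diagonalize `R Σ⁻¹ R = U diag(d) Uᵀ` with `U` orthogonal. The substitution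
`x = R U z` whitens both Gaussians at once: `f_{Σ₀}` becomes the standard normal density and the
log-likelihood ratio becomes the quadratic polynomial `-½ Σ log dᵢ + ½ Σ (dᵢ - 1) zᵢ²`. So `K` and
`V` are its first two moments under independent standard normals, computed from `E z² = 1` and
`E z⁴ = 3`; the variance `V - K²` is `¼ Σ (dᵢ - 1)² Var(zᵢ²) = ½ Σ (1 - dᵢ)²`. Finally
`K = ½ Σ (dᵢ - 1 - log dᵢ) ≥ 0`, so under the extra hypotheses `K² ≤ (Σ (1 - dᵢ)²)² ≤ Σ (1 - dᵢ)²`.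
-/

open ProbabilityTheory
open scoped Nat

lemma gaussianPDFReal_zero_one (t : ℝ) :
    gaussianPDFReal 0 1 t = (√(2 * π))⁻¹ * exp (-(1 / 2) * t ^ 2) := by
  simp only [gaussianPDFReal, NNReal.coe_one, mul_one, sub_zero]; ring_nf

lemma integrable_pow_mul_gaussianPDFReal (n : ℕ) :
    Integrable fun t : ℝ ↦ t ^ n * gaussianPDFReal 0 1 t := by
  have := integrable_rpow_mul_exp_neg_mul_sq (b := 1 / 2) (by norm_num) (s := n)
    (neg_one_lt_zero.trans_le n.cast_nonneg)
  simp_rw [Real.rpow_natCast] at this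
  simp_rw [gaussianPDFReal_zero_one, mul_left_comm _ (√(2 * π))⁻¹]
  exact this.const_mul _

lemma integral_pow_two_mul_mul_gaussianPDFReal (k : ℕ) :
    ∫ t, t ^ (2 * k) * gaussianPDFReal 0 1 t = (2 * k - 1)‼ := by
  have habs : ∀ t : ℝ, t ^ (2 * k) * gaussianPDFReal 0 1 t
      = (√(2 * π))⁻¹ * (|t| ^ ((2 * k : ℕ) : ℝ) * exp (-(1 / 2) * |t| ^ (2 : ℝ))) := by
    intro t
    rw [gaussianPDFReal_zero_one, Real.rpow_two, sq_abs, Real.rpow_natCast,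
      (even_two_mul k).pow_abs]
    ring
  simp_rw [habs]
  rw [integral_const_mul,
    integral_comp_abs (f := fun x ↦ x ^ ((2 * k : ℕ) : ℝ) * exp (-(1 / 2) * x ^ (2 : ℝ))),
    integral_rpow_mul_exp_neg_mul_rpow (by norm_num)
      (neg_one_lt_zero.trans_le (Nat.cast_nonneg _)) (by norm_num)]
  push_cast
  rw [show ((2 * k : ℝ) + 1) / 2 = k + 1 / 2 by ring, Real.Gamma_nat_add_half,
    show -((2 * k : ℝ) + 1) / 2 = -(k + 1 / 2) by ring, one_div (2 : ℝ),
    Real.inv_rpow (by norm_num), ← Real.rpow_neg (by norm_num), neg_neg,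
    Real.rpow_add (by norm_num), Real.rpow_natCast,
    show (2 : ℝ) ^ (2⁻¹ : ℝ) = √2 by rw [Real.sqrt_eq_rpow, one_div],
    Real.sqrt_mul (by norm_num)]
  field_simp

section StandardGaussian

variable {p : ℕ}

lemma gaussDensity_one_eq_prod (z : Fin p → ℝ) :
    gaussDensity 1 z = ∏ k, gaussianPDFReal 0 1 (z k) := by
  have hpi : (2 * π) ^ (-(p : ℝ) / 2) = (√(2 * π))⁻¹ ^ p := by
    rw [Real.sqrt_eq_rpow, ← Real.rpow_neg (by positivity), ← Real.rpow_natCast,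
      ← Real.rpow_mul (by positivity)]
    ring_nf
  simp_rw [gaussianPDFReal_zero_one, Finset.prod_mul_distrib, ← Real.exp_sum, ← Finset.mul_sum,
    Finset.prod_const, Finset.card_univ, Fintype.card_fin, gaussDensity, det_one, Real.one_rpow,
    mul_one, inv_one, one_mulVec, hpi]
  simp [dotProduct, sq]

lemma integrable_gaussDensity_one_mul_prod_pow (n : Fin p → ℕ) :
    Integrable fun z : Fin p → ℝ ↦ gaussDensity 1 z * ∏ k, z k ^ n k := by
  simp_rw [gaussDensity_one_eq_prod, ← Finset.prod_mul_distrib]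
  exact Integrable.fintype_prod (f := fun k t ↦ gaussianPDFReal 0 1 t * t ^ n k)
    fun k ↦ by simpa only [mul_comm] using integrable_pow_mul_gaussianPDFReal (n k)

lemma integral_gaussDensity_one_mul_prod_pow (n : Fin p → ℕ) :
    ∫ z : Fin p → ℝ, gaussDensity 1 z * ∏ k, z k ^ (2 * n k) = ∏ k, ((2 * n k - 1)‼ : ℝ) := by
  simp_rw [gaussDensity_one_eq_prod, ← Finset.prod_mul_distrib, volume_pi]
  rw [integral_fintype_prod_eq_prod (f := fun k t ↦ gaussianPDFReal 0 1 t * t ^ (2 * n k))]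
  simp_rw [mul_comm (gaussianPDFReal 0 1 _), integral_pow_two_mul_mul_gaussianPDFReal]

lemma prod_pow_two_mul_boole (z : Fin p → ℝ) (i : Fin p) :
    ∏ k, z k ^ (2 * if i = k then 1 else 0) = z i ^ 2 := by
  simp_rw [pow_mul, Finset.prod_pow_boole, Finset.mem_univ, if_true]

lemma integrable_gaussDensity_one : Integrable (gaussDensity 1 : (Fin p → ℝ) → ℝ) := by
  simpa using integrable_gaussDensity_one_mul_prod_pow (p := p) 0

lemma integrable_gaussDensity_one_mul_sq (i : Fin p) :
    Integrable fun z : Fin p → ℝ ↦ gaussDensity 1 z * z i ^ 2 := by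
  simpa only [prod_pow_two_mul_boole] using
    integrable_gaussDensity_one_mul_prod_pow fun k ↦ 2 * if i = k then 1 else 0

lemma integrable_gaussDensity_one_mul_sq_mul_sq (i j : Fin p) :
    Integrable fun z : Fin p → ℝ ↦ gaussDensity 1 z * (z i ^ 2 * z j ^ 2) := by
  simpa only [mul_add, pow_add, Finset.prod_mul_distrib, prod_pow_two_mul_boole] using
    integrable_gaussDensity_one_mul_prod_pow fun k ↦
      2 * ((if i = k then 1 else 0) + if j = k then 1 else 0)

lemma integral_gaussDensity_one : ∫ z : Fin p → ℝ, gaussDensity 1 z = 1 := by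
  simpa using integral_gaussDensity_one_mul_prod_pow (p := p) 0

lemma integral_gaussDensity_one_mul_sq (i : Fin p) :
    ∫ z : Fin p → ℝ, gaussDensity 1 z * z i ^ 2 = 1 := by
  have := integral_gaussDensity_one_mul_prod_pow fun k ↦ if i = k then 1 else 0
  simp_rw [prod_pow_two_mul_boole] at this
  rw [this]
  exact Finset.prod_eq_one fun k _ ↦ by split_ifs <;> simp

lemma integral_gaussDensity_one_mul_sq_mul_sq (i j : Fin p) :
    ∫ z : Fin p → ℝ, gaussDensity 1 z * (z i ^ 2 * z j ^ 2) = if i = j then 3 else 1 := by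
  have := integral_gaussDensity_one_mul_prod_pow fun k ↦
    (if i = k then 1 else 0) + if j = k then 1 else 0
  simp_rw [mul_add, pow_add, Finset.prod_mul_distrib, prod_pow_two_mul_boole] at this
  rw [this]
  split_ifs with hij
  · subst hij
    rw [Finset.prod_eq_single i (fun k _ hk ↦ by simp [Ne.symm hk]) (by simp)]
    simp
  · exact Finset.prod_eq_one fun k _ ↦ by split_ifs <;> simp_all

end StandardGaussian

section Quadratic

variable {p : ℕ} (a : Fin p → ℝ)

lemma integrable_gaussDensity_one_mul_sum_sq :
    Integrable fun z : Fin p → ℝ ↦ gaussDensity 1 z * ∑ i, a i * z i ^ 2 := by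
  simp_rw [Finset.mul_sum, mul_left_comm (gaussDensity 1 _)]
  exact integrable_finsetSum _ fun i _ ↦ (integrable_gaussDensity_one_mul_sq i).const_mul _

lemma integral_gaussDensity_one_mul_sum_sq :
    ∫ z : Fin p → ℝ, gaussDensity 1 z * ∑ i, a i * z i ^ 2 = ∑ i, a i := by
  simp_rw [Finset.mul_sum, mul_left_comm (gaussDensity 1 _)]
  rw [integral_finsetSum _ fun i _ ↦ (integrable_gaussDensity_one_mul_sq i).const_mul _]
  simp_rw [integral_const_mul, integral_gaussDensity_one_mul_sq, mul_one]

lemma gaussDensity_one_mul_sum_sq_sq (z : Fin p → ℝ) :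
    gaussDensity 1 z * (∑ i, a i * z i ^ 2) ^ 2
      = ∑ i, ∑ j, a i * a j * (gaussDensity 1 z * (z i ^ 2 * z j ^ 2)) := by
  rw [sq, Finset.sum_mul_sum, Finset.mul_sum]
  refine Finset.sum_congr rfl fun i _ ↦ ?_
  rw [Finset.mul_sum]
  exact Finset.sum_congr rfl fun j _ ↦ by ring

lemma integrable_gaussDensity_one_mul_sum_sq_sq :
    Integrable fun z : Fin p → ℝ ↦ gaussDensity 1 z * (∑ i, a i * z i ^ 2) ^ 2 := by
  simp_rw [gaussDensity_one_mul_sum_sq_sq]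
  exact integrable_finsetSum _ fun i _ ↦ integrable_finsetSum _ fun j _ ↦
    (integrable_gaussDensity_one_mul_sq_mul_sq i j).const_mul _

lemma integral_gaussDensity_one_mul_sum_sq_sq :
    ∫ z : Fin p → ℝ, gaussDensity 1 z * (∑ i, a i * z i ^ 2) ^ 2
      = (∑ i, a i) ^ 2 + 2 * ∑ i, a i ^ 2 := by
  have hint : ∀ i j, Integrable fun z : Fin p → ℝ ↦
      a i * a j * (gaussDensity 1 z * (z i ^ 2 * z j ^ 2)) :=
    fun i j ↦ (integrable_gaussDensity_one_mul_sq_mul_sq i j).const_mul _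
  simp_rw [gaussDensity_one_mul_sum_sq_sq]
  rw [integral_finsetSum _ fun i _ ↦ integrable_finsetSum _ fun j _ ↦ hint i j]
  simp_rw [integral_finsetSum _ fun j _ ↦ hint _ j, integral_const_mul,
    integral_gaussDensity_one_mul_sq_mul_sq, mul_ite, mul_one]
  have hdiag : ∀ i j : Fin p, (if i = j then a i * a j * 3 else a i * a j)
      = a i * a j + if i = j then 2 * a i ^ 2 else 0 := by
    intro i j; split_ifs with h <;> [subst h; skip] <;> ring
  simp_rw [hdiag, Finset.sum_add_distrib, Finset.sum_ite_eq, Finset.mem_univ, if_true,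
    ← Finset.sum_mul_sum, ← sq, ← Finset.mul_sum]

variable (c : ℝ)

lemma integral_gaussDensity_one_mul_affine_sum_sq :
    ∫ z : Fin p → ℝ, gaussDensity 1 z * (c + (1 / 2) * ∑ i, a i * z i ^ 2)
      = c + (1 / 2) * ∑ i, a i := by
  have hexpand : ∀ z : Fin p → ℝ, gaussDensity 1 z * (c + (1 / 2) * ∑ i, a i * z i ^ 2)
      = c * gaussDensity 1 z + 1 / 2 * (gaussDensity 1 z * ∑ i, a i * z i ^ 2) :=
    fun z ↦ by ring
  simp_rw [hexpand]
  rw [integral_add (integrable_gaussDensity_one.const_mul _)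
      ((integrable_gaussDensity_one_mul_sum_sq a).const_mul _),
    integral_const_mul, integral_const_mul, integral_gaussDensity_one,
    integral_gaussDensity_one_mul_sum_sq, mul_one]

lemma integral_gaussDensity_one_mul_affine_sum_sq_sq :
    ∫ z : Fin p → ℝ, gaussDensity 1 z * (c + (1 / 2) * ∑ i, a i * z i ^ 2) ^ 2
      = (c + (1 / 2) * ∑ i, a i) ^ 2 + (1 / 2) * ∑ i, a i ^ 2 := by
  have hexpand : ∀ z : Fin p → ℝ, gaussDensity 1 z * (c + (1 / 2) * ∑ i, a i * z i ^ 2) ^ 2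
      = c ^ 2 * gaussDensity 1 z + c * (gaussDensity 1 z * ∑ i, a i * z i ^ 2)
        + 1 / 4 * (gaussDensity 1 z * (∑ i, a i * z i ^ 2) ^ 2) :=
    fun z ↦ by ring
  have hint₀ := integrable_gaussDensity_one (p := p)
  have hint₁ := integrable_gaussDensity_one_mul_sum_sq a
  have hint₂ := integrable_gaussDensity_one_mul_sum_sq_sq a
  simp_rw [hexpand]
  rw [integral_add ((hint₀.const_mul _).fun_add (hint₁.const_mul _)) (hint₂.const_mul _),
    integral_add (hint₀.const_mul _) (hint₁.const_mul _),
    integral_const_mul, integral_const_mul, integral_const_mul, integral_gaussDensity_one,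
    integral_gaussDensity_one_mul_sum_sq, integral_gaussDensity_one_mul_sum_sq_sq]
  ring

end Quadratic

lemma integral_eq_abs_det_mul_integral_comp_mulVec {ι E : Type*} [Fintype ι] [DecidableEq ι]
    [NormedAddCommGroup E] [NormedSpace ℝ E] {T : Matrix ι ι ℝ} (hT : T.det ≠ 0)
    (g : (ι → ℝ) → E) : ∫ x, g x = |T.det| • ∫ z, g (T *ᵥ z) := by
  have hT' : LinearMap.det (toLin' T) ≠ 0 := by rwa [LinearMap.det_toLin']
  have hemb : MeasurableEmbedding (toLin' T) :=
    (LinearMap.equivOfDetNeZero _ hT').toContinuousLinearEquiv.toHomeomorph.measurableEmbedding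
  have := hemb.integral_map (μ := volume) g
  rw [Real.map_matrix_volume_pi_eq_smul_volume_pi hT, integral_smul_measure] at this
  simp_rw [toLin'_apply] at this
  rw [← this, ENNReal.toReal_ofReal (abs_nonneg _), abs_inv, smul_inv_smul₀ (abs_ne_zero.2 hT)]

section Whitening

variable {p : ℕ}

lemma mulVec_dotProduct_mulVec_mulVec {n R : Type*} [Fintype n] [CommSemiring R]
    (T A : Matrix n n R) (z : n → R) :
    (T *ᵥ z) ⬝ᵥ A *ᵥ (T *ᵥ z) = z ⬝ᵥ (Tᵀ * A * T) *ᵥ z := by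
  rw [← mulVec_mulVec, ← mulVec_mulVec, dotProduct_mulVec z,
    vecMul_transpose]

lemma det_transpose_mul_inv_mul {n : Type*} [Fintype n] [DecidableEq n] (T A : Matrix n n ℝ) :
    (Tᵀ * A⁻¹ * T).det = T.det ^ 2 / A.det := by
  rw [det_mul, det_mul, det_transpose, det_nonsing_inv, Ring.inverse_eq_inv']
  ring

lemma gaussDensity_pos {A : Matrix (Fin p) (Fin p) ℝ} (hA : 0 < A.det) (x : Fin p → ℝ) :
    0 < gaussDensity A x := by
  unfold gaussDensity
  positivity

lemma log_gaussDensity {A : Matrix (Fin p) (Fin p) ℝ} (hA : 0 < A.det) (x : Fin p → ℝ) :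
    log (gaussDensity A x)
      = -(p / 2) * log (2 * π) - (1 / 2) * log A.det - (1 / 2) * (x ⬝ᵥ A⁻¹ *ᵥ x) := by
  unfold gaussDensity
  rw [log_mul (by positivity) (by positivity), log_mul (by positivity) (by positivity),
    log_rpow (by positivity), log_rpow hA, log_exp]
  ring

variable {S0 S T : Matrix (Fin p) (Fin p) ℝ} {d : Fin p → ℝ}

lemma det_eq_sq_of_transpose_mul_inv_mul_eq_one (hT0 : Tᵀ * S0⁻¹ * T = 1) :
    S0.det = T.det ^ 2 ∧ T.det ≠ 0 := by
  have h := congrArg det hT0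
  rw [det_transpose_mul_inv_mul, det_one] at h
  have hS0 : S0.det ≠ 0 := by rintro h0; simp [h0] at h
  have hsq : S0.det = T.det ^ 2 := ((div_eq_one_iff_eq hS0).1 h).symm
  exact ⟨hsq, fun h0 ↦ hS0 (by simp [hsq, h0])⟩

lemma abs_det_mul_gaussDensity_mulVec (hT0 : Tᵀ * S0⁻¹ * T = 1) (z : Fin p → ℝ) :
    |T.det| * gaussDensity S0 (T *ᵥ z) = gaussDensity 1 z := by
  obtain ⟨hS0, hTdet⟩ := det_eq_sq_of_transpose_mul_inv_mul_eq_one hT0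
  have hpow : S0.det ^ (-(1 : ℝ) / 2) = |T.det|⁻¹ := by
    rw [hS0, ← sq_abs, ← rpow_natCast, ← rpow_mul (abs_nonneg _)]
    norm_num [rpow_neg_one]
  simp only [gaussDensity, mulVec_dotProduct_mulVec_mulVec, hT0, hpow, det_one, one_rpow,
    inv_one]
  field_simp

lemma log_gaussDensity_div_gaussDensity_mulVec (hT0 : Tᵀ * S0⁻¹ * T = 1)
    (hT : Tᵀ * S⁻¹ * T = diagonal d) (hd : ∀ i, 0 < d i) (z : Fin p → ℝ) :
    log (gaussDensity S0 (T *ᵥ z) / gaussDensity S (T *ᵥ z))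
      = -(1 / 2) * ∑ i, log (d i) + (1 / 2) * ∑ i, (d i - 1) * z i ^ 2 := by
  obtain ⟨hS0, hTdet⟩ := det_eq_sq_of_transpose_mul_inv_mul_eq_one hT0
  have hprod : 0 < ∏ i, d i := Finset.prod_pos fun i _ ↦ hd i
  have hS : S.det = T.det ^ 2 / ∏ i, d i := by
    have h := congrArg det hT
    rw [det_transpose_mul_inv_mul, det_diagonal] at h
    have hSne : S.det ≠ 0 := by rintro h0; simp [h0, hprod.ne] at h
    rw [← h]
    field_simp
  have hS0pos : 0 < S0.det := by rw [hS0]; positivity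
  have hSpos : 0 < S.det := by rw [hS]; positivity
  rw [log_div (gaussDensity_pos hS0pos _).ne' (gaussDensity_pos hSpos _).ne',
    log_gaussDensity hS0pos, log_gaussDensity hSpos, mulVec_dotProduct_mulVec_mulVec,
    mulVec_dotProduct_mulVec_mulVec, hT0, hT, hS0, hS, log_div (by positivity) hprod.ne',
    log_prod fun i _ ↦ (hd i).ne']
  simp only [one_mulVec, mulVec_diagonal, dotProduct, sub_mul, Finset.sum_sub_distrib, sq,
    one_mul, mul_left_comm (z _)]
  ring

lemma integral_gaussDensity_mul_comp_log_div (hT0 : Tᵀ * S0⁻¹ * T = 1)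
    (hT : Tᵀ * S⁻¹ * T = diagonal d) (hd : ∀ i, 0 < d i) (g : ℝ → ℝ) :
    ∫ x, gaussDensity S0 x * g (log (gaussDensity S0 x / gaussDensity S x))
      = ∫ z, gaussDensity 1 z *
          g (-(1 / 2) * ∑ i, log (d i) + (1 / 2) * ∑ i, (d i - 1) * z i ^ 2) := by
  rw [integral_eq_abs_det_mul_integral_comp_mulVec
    (det_eq_sq_of_transpose_mul_inv_mul_eq_one hT0).2, smul_eq_mul, ← integral_const_mul]
  congr 1 with z
  rw [log_gaussDensity_div_gaussDensity_mulVec hT0 hT hd, ← mul_assoc,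
    abs_det_mul_gaussDensity_mulVec hT0]

end Whitening

section KullbackLeibler

variable {p : ℕ} {S0 S T : Matrix (Fin p) (Fin p) ℝ} {d : Fin p → ℝ}

lemma KLdiv_eq_of_whitening (hT0 : Tᵀ * S0⁻¹ * T = 1) (hT : Tᵀ * S⁻¹ * T = diagonal d)
    (hd : ∀ i, 0 < d i) :
    KLdiv S0 S = -(1 / 2) * ∑ i, log (d i) + (1 / 2) * ∑ i, (d i - 1) :=
  (integral_gaussDensity_mul_comp_log_div hT0 hT hd id).trans
    (integral_gaussDensity_one_mul_affine_sum_sq _ _)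

lemma KLdiv_nonneg_of_whitening (hT0 : Tᵀ * S0⁻¹ * T = 1) (hT : Tᵀ * S⁻¹ * T = diagonal d)
    (hd : ∀ i, 0 < d i) : 0 ≤ KLdiv S0 S := by
  have h : 0 ≤ ∑ i, (d i - 1 - log (d i)) :=
    Finset.sum_nonneg fun i _ ↦ sub_nonneg.2 (log_le_sub_one_of_pos (hd i))
  rw [Finset.sum_sub_distrib] at h
  rw [KLdiv_eq_of_whitening hT0 hT hd]
  linarith

lemma KLvar_eq_of_whitening (hT0 : Tᵀ * S0⁻¹ * T = 1) (hT : Tᵀ * S⁻¹ * T = diagonal d)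
    (hd : ∀ i, 0 < d i) :
    KLvar S0 S = (1 / 2) * ∑ i, (1 - d i) ^ 2 + KLdiv S0 S ^ 2 := by
  have h := (integral_gaussDensity_mul_comp_log_div hT0 hT hd (· ^ 2)).trans
    (integral_gaussDensity_one_mul_affine_sum_sq_sq _ _)
  rw [KLvar, h, KLdiv_eq_of_whitening hT0 hT hd,
    Finset.sum_congr rfl fun i _ ↦ sub_sq_comm (d i) 1]
  ring

end KullbackLeibler

section SpectralWhitening

variable {n : Type*} [Fintype n] [DecidableEq n]

lemma Matrix.IsHermitian.transpose_eigenvectorUnitary_mul_mul {A : Matrix n n ℝ}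
    (hA : A.IsHermitian) :
    (hA.eigenvectorUnitary : Matrix n n ℝ)ᵀ * A * hA.eigenvectorUnitary
      = diagonal hA.eigenvalues := by
  have h := hA.conjStarAlgAut_star_eigenvectorUnitary
  rw [Unitary.conjStarAlgAut_star_apply] at h
  simpa [star_eq_conjTranspose, conjTranspose_eq_transpose_of_trivial] using h

lemma transpose_mul_inv_mul_self_mul_eq_one {R U : Matrix n n ℝ} (hRt : Rᵀ = R)
    (hR : IsUnit R.det) (hU : U ∈ orthogonalGroup n ℝ) :
    (R * U)ᵀ * (R * R)⁻¹ * (R * U) = 1 := by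
  rw [transpose_mul, hRt, Matrix.mul_inv_rev]
  calc Uᵀ * R * (R⁻¹ * R⁻¹) * (R * U) = Uᵀ * ((R * R⁻¹) * (R⁻¹ * R)) * U := by
        simp only [Matrix.mul_assoc]
    _ = 1 := by
        rw [mul_nonsing_inv R hR, nonsing_inv_mul R hR, Matrix.mul_one, Matrix.mul_one,
          (mem_orthogonalGroup_iff' n ℝ).1 hU]

lemma exists_transpose_mul_inv_mul_eq_diagonal_eigenvalues {S0 S R : Matrix n n ℝ}
    (hR : R.PosDef) (hRR : R * R = S0) (hM : (R * S⁻¹ * R).IsHermitian) :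
    ∃ T : Matrix n n ℝ, Tᵀ * S0⁻¹ * T = 1 ∧ Tᵀ * S⁻¹ * T = diagonal hM.eigenvalues := by
  have hRt : Rᵀ = R := (isHermitian_iff_isSymm.1 hR.isHermitian).eq
  refine ⟨R * hM.eigenvectorUnitary, hRR ▸ transpose_mul_inv_mul_self_mul_eq_one hRt
    hR.det_pos.ne'.isUnit hM.eigenvectorUnitary.2, ?_⟩
  rw [← hM.transpose_eigenvectorUnitary_mul_mul, transpose_mul, hRt]
  simp only [Matrix.mul_assoc]

lemma Matrix.PosDef.mul_inv_mul_same {S R : Matrix n n ℝ} (hS : S.PosDef) (hR : R.PosDef) :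
    (R * S⁻¹ * R).PosDef := by
  have h := hS.inv.conjTranspose_mul_mul_same
    (mulVec_injective_iff_isUnit.2 ((isUnit_iff_isUnit_det R).2 hR.det_pos.ne'.isUnit))
  rwa [hR.isHermitian.eq] at h

end SpectralWhitening

theorem stmt7_general {p : ℕ} (S0 S R : Matrix (Fin p) (Fin p) ℝ)
    (h : S.PosDef) (hR : R.PosDef) (hRR : R * R = S0)
    (hM : (R * S⁻¹ * R).IsHermitian) :
    KLvar S0 S = (1 / 2) * (∑ i, (1 - hM.eigenvalues i) ^ 2) + (KLdiv S0 S) ^ 2 ∧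
      (KLdiv S0 S ≤ ∑ i, (1 - hM.eigenvalues i) ^ 2 →
        (∑ i, (1 - hM.eigenvalues i) ^ 2) ≤ 1 →
        KLvar S0 S ≤ (3 / 2) * ∑ i, (1 - hM.eigenvalues i) ^ 2) := by
  obtain ⟨T, hT0, hT⟩ := exists_transpose_mul_inv_mul_eq_diagonal_eigenvalues hR hRR hM
  have hd := (h.mul_inv_mul_same hR).eigenvalues_pos
  have hV := KLvar_eq_of_whitening hT0 hT hd
  set A := ∑ i, (1 - hM.eigenvalues i) ^ 2
  refine ⟨hV, fun hK hA ↦ ?_⟩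
  have hK0 := KLdiv_nonneg_of_whitening hT0 hT hd
  have hA0 : 0 ≤ A := by positivity
  calc KLvar S0 S ≤ (1 / 2) * A + A * A := by rw [hV, sq]; gcongr
    _ ≤ (3 / 2) * A := by linarith [mul_le_of_le_one_right hA0 hA]

theorem stmt7 {p : ℕ} (S0 S R : Matrix (Fin p) (Fin p) ℝ)
    (h0 : S0.PosDef) (h : S.PosDef) (hR : R.PosDef) (hRR : R * R = S0)
    (hM : (R * S⁻¹ * R).IsHermitian) :
    KLvar S0 S = (1 / 2) * (∑ i, (1 - hM.eigenvalues i) ^ 2) + (KLdiv S0 S) ^ 2 ∧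
      (KLdiv S0 S ≤ ∑ i, (1 - hM.eigenvalues i) ^ 2 →
        (∑ i, (1 - hM.eigenvalues i) ^ 2) ≤ 1 →
        KLvar S0 S ≤ (3 / 2) * ∑ i, (1 - hM.eigenvalues i) ^ 2) :=
  stmt7_general S0 S R h hR hRR hM
end

section
/- Let 0 ≤ k ≤ m be natural numbers with 2k ≤ m, and let 0 ≤ j ≤ k. Then the hypergeometric probability satisfies C(k, j)·C(m − k, k − j) / C(m, k) ≤ (k²/(m − k))^j. -/
lemma key_nat (k m j : ℕ) (hkm : k ≤ m) (hj : j ≤ k) :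
    (m - k).choose (k - j) * (m - k) ^ j * k.factorial ≤
      m.choose k * k.factorial * k ^ j := by
  have h1 : k.factorial = (k - j).factorial * k.descFactorial j :=
    (Nat.factorial_mul_descFactorial hj).symm
  calc (m - k).choose (k - j) * (m - k) ^ j * k.factorial
      = ((k - j).factorial * (m - k).choose (k - j)) * (m - k) ^ j * k.descFactorial j := by
        rw [h1]; ring
    _ = (m - k).descFactorial (k - j) * (m - k) ^ j * k.descFactorial j := by
        rw [Nat.descFactorial_eq_factorial_mul_choose (m - k) (k - j)]
    _ ≤ (m - k) ^ (k - j) * (m - k) ^ j * k ^ j := by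
        exact Nat.mul_le_mul (Nat.mul_le_mul_right _ (Nat.descFactorial_le_pow _ _))
          (Nat.descFactorial_le_pow _ _)
    _ = (m - k) ^ k * k ^ j := by
        rw [← pow_add, Nat.sub_add_cancel hj]
    _ ≤ m.descFactorial k * k ^ j := by
        refine Nat.mul_le_mul_right _ ?_
        calc (m - k) ^ k ≤ (m + 1 - k) ^ k := Nat.pow_le_pow_left (by omega) _
          _ ≤ m.descFactorial k := Nat.pow_sub_le_descFactorial m k
    _ = m.choose k * k.factorial * k ^ j := by
        rw [Nat.descFactorial_eq_factorial_mul_choose, Nat.mul_comm k.factorial]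

lemma key_nat' (k m j : ℕ) (hkm : k ≤ m) (hj : j ≤ k) :
    k.choose j * ((m - k).choose (k - j)) * (m - k) ^ j ≤ m.choose k * k ^ (2 * j) := by
  have h1 : (m - k).choose (k - j) * (m - k) ^ j ≤ m.choose k * k ^ j :=
    Nat.le_of_mul_le_mul_right (by
      calc (m - k).choose (k - j) * (m - k) ^ j * k.factorial
          ≤ m.choose k * k.factorial * k ^ j := key_nat k m j hkm hj
        _ = m.choose k * k ^ j * k.factorial := by ring) k.factorial_pos
  have h2 : k.choose j ≤ k ^ j := by
    calc k.choose j ≤ k.descFactorial j := by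
          rw [Nat.descFactorial_eq_factorial_mul_choose k j]
          exact Nat.le_mul_of_pos_left _ j.factorial_pos
      _ ≤ k ^ j := Nat.descFactorial_le_pow _ _
  calc k.choose j * ((m - k).choose (k - j)) * (m - k) ^ j
      = k.choose j * ((m - k).choose (k - j) * (m - k) ^ j) := by ring
    _ ≤ k ^ j * (m.choose k * k ^ j) := Nat.mul_le_mul h2 h1
    _ = m.choose k * k ^ (2 * j) := by rw [two_mul, pow_add]; ring

theorem stmt11 (k m j : ℕ) (hkm : k < m) (h2k : 2 * k ≤ m) (hj : j ≤ k) :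
    (k.choose j : ℝ) * ((m - k).choose (k - j)) / (m.choose k) ≤
      ((k : ℝ) ^ 2 / ((m : ℝ) - k)) ^ j := by
  have hmk : (m : ℝ) - k = ((m - k : ℕ) : ℝ) := by
    rw [Nat.cast_sub hkm.le]
  have hmkpos : (0 : ℝ) < ((m - k : ℕ) : ℝ) := by
    have : 0 < m - k := by omega
    exact_mod_cast this
  have hC : (0 : ℝ) < (m.choose k : ℝ) := by
    exact_mod_cast Nat.choose_pos hkm.le
  rw [hmk, div_pow, div_le_div_iff₀ hC (pow_pos hmkpos j)]
  have := key_nat' k m j hkm.le hj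
  calc (k.choose j : ℝ) * ((m - k).choose (k - j)) * ((m - k : ℕ) : ℝ) ^ j
      = ((k.choose j * ((m - k).choose (k - j)) * (m - k) ^ j : ℕ) : ℝ) := by push_cast; ring
    _ ≤ ((m.choose k * k ^ (2 * j) : ℕ) : ℝ) := by exact_mod_cast this
    _ = ((k : ℝ) ^ 2) ^ j * (m.choose k : ℝ) := by push_cast; rw [← pow_mul]; ring
end
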